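/- arXiv:2112.13220 — 5 statements merged into one kernel-verified Lean document; each statement's English description precedes it below -/
import Mathlib

section
/- Let B be a commutative domain over a field k of characteristic zero, δ a nonzero locally nilpotent k-derivation of B with kernel A, and f ∈ A. If θ is a k-algebra automorphism of B commuting with δ and θ commutes with Exp(f·δ), then θ(f) = f. -/
/-- From local nilpotency one can find an element `s` with `δ s ≠ 0` and `δ (δ s) = 0`. -/
lemma exists_slice {k B : Type*} [Field k] [CommRing B] [Algebra k B]
    (δ : Derivation k B B) :
    ∀ (n : ℕ) (b : B), (⇑δ)^[n] b = 0 → δ b ≠ 0 → ∃ s, δ s ≠ 0 ∧ δ (δ s) = 0 := by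
  intro n
  induction n with
  | zero =>
    intro b h0 hb
    simp at h0
    simp [h0] at hb
  | succ m ih =>
    intro b h0 hb
    by_cases hdd : δ (δ b) = 0
    · exact ⟨b, hb, hdd⟩
    · have h0' : (⇑δ)^[m] (δ b) = 0 := by
        rwa [Function.iterate_succ_apply] at h0
      exact ih (δ b) h0' hdd

/-- If a `k`-algebra automorphism `θ` commutes with a nonzero locally nilpotent derivation `δ`
and also commutes with the exponential automorphism `Exp (f • δ)` for some `f` in the kernel
of `δ`, then `θ f = f`. -/
theorem fixes_of_commutes_with_exp
    {k B : Type*} [Field k] [CharZero k] [CommRing B] [IsDomain B] [Algebra k B]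
    (δ : Derivation k B B) (hδne : ∃ b, δ b ≠ 0)
    (hln : ∀ b : B, ∃ n : ℕ, (⇑δ)^[n] b = 0)
    (f : B) (hf : δ f = 0)
    (E : B ≃ₐ[k] B)
    (hE : ∀ (b : B) (n : ℕ), (fun x => f * δ x)^[n] b = 0 →
      E b = ∑ i ∈ Finset.range n, (i.factorial : k)⁻¹ • (fun x => f * δ x)^[i] b)
    (θ : B ≃ₐ[k] B) (hθ : ∀ b, θ (δ b) = δ (θ b))
    (hθE : ∀ b, θ (E b) = E (θ b)) :
    θ f = f := by
  obtain ⟨b, hb⟩ := hδne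
  obtain ⟨n, hn⟩ := hln b
  obtain ⟨s, hs, hss⟩ := exists_slice δ n b hn hb
  -- (f·δ)² s = 0
  have key : ∀ t : B, δ (δ t) = 0 → (fun x => f * δ x)^[2] t = 0 := by
    intro t ht
    show f * δ (f * δ t) = 0
    rw [Derivation.leibniz, hf, ht]
    simp
  have Es : E s = s + f * δ s := by
    rw [hE s 2 (key s hss)]
    simp [Finset.sum_range_succ, Nat.factorial]
  have hθs2 : δ (δ (θ s)) = 0 := by
    rw [← hθ, ← hθ, hss, map_zero]
  have Eθs : E (θ s) = θ s + f * δ (θ s) := by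
    rw [hE (θ s) 2 (key (θ s) hθs2)]
    simp [Finset.sum_range_succ, Nat.factorial]
  have heq : θ s + θ f * θ (δ s) = θ s + f * θ (δ s) := by
    have h1 := hθE s
    rw [Es, Eθs] at h1
    rw [map_add, map_mul] at h1
    rw [h1, hθ]
  have hne : θ (δ s) ≠ 0 := by
    intro h
    exact hs (θ.injective (by rw [h, map_zero]))
  have h2 : (θ f - f) * θ (δ s) = 0 := by ring_nf; linear_combination heq
  rcases mul_eq_zero.mp h2 with h | h
  · exact sub_eq_zero.mp h
  · exact absurd h hne
end

section
/- Let B be an almost rigid domain over a field k of characteristic zero, with canonical locally nilpotent derivation D whose kernel is A, and suppose every unit of B lies in k (equivalently, A is factorially closed in B and we use that A* consists of units of A). Then for every k-algebra automorphism φ of B, the conjugate φ ∘ D ∘ φ⁻¹ equals f·D for some unit f of A. -/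
/-- The conjugate of a derivation by an algebra automorphism. -/
def conjDer {k B : Type*} [CommSemiring k] [CommRing B] [Algebra k B]
    (D : Derivation k B B) (φ : B ≃ₐ[k] B) : Derivation k B B where
  toLinearMap := φ.toLinearMap ∘ₗ D.toLinearMap ∘ₗ φ.symm.toLinearMap
  map_one_eq_zero' := by simp
  leibniz' a b := by
    simp only [LinearMap.coe_comp, Function.comp_apply, AlgEquiv.toLinearMap_apply,
      Derivation.coeFn_coe, map_mul, Derivation.leibniz, smul_eq_mul, map_add,
      AlgEquiv.apply_symm_apply]

@[simp] lemma conjDer_apply {k B : Type*} [CommSemiring k] [CommRing B] [Algebra k B]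
    (D : Derivation k B B) (φ : B ≃ₐ[k] B) (b : B) :
    conjDer D φ b = φ (D (φ.symm b)) := rfl

lemma conjDer_iterate {k B : Type*} [CommSemiring k] [CommRing B] [Algebra k B]
    (D : Derivation k B B) (φ : B ≃ₐ[k] B) (n : ℕ) (b : B) :
    (⇑(conjDer D φ))^[n] b = φ ((⇑D)^[n] (φ.symm b)) := by
  induction n generalizing b with
  | zero => simp
  | succ n ih =>
    rw [Function.iterate_succ_apply, Function.iterate_succ_apply, conjDer_apply,
      ih, AlgEquiv.symm_apply_apply]

lemma conjDer_ln {k B : Type*} [CommSemiring k] [CommRing B] [Algebra k B]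
    (D : Derivation k B B) (φ : B ≃ₐ[k] B)
    (hlnD : ∀ b : B, ∃ n : ℕ, (⇑D)^[n] b = 0) (b : B) :
    ∃ n : ℕ, (⇑(conjDer D φ))^[n] b = 0 := by
  obtain ⟨n, hn⟩ := hlnD (φ.symm b)
  exact ⟨n, by rw [conjDer_iterate, hn, map_zero]⟩

/-- For an almost rigid domain `B` (every locally nilpotent derivation is a replica `h • D`
of the canonical locally nilpotent derivation `D`) in which every unit comes from `k`,
the conjugate of `D` by any `k`-algebra automorphism `φ` equals `f • D` for some unit `f`
in the kernel of `D`. -/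
theorem conj_canonical_lnd_eq_unit_replica
    {k B : Type*} [Field k] [CharZero k] [CommRing B] [IsDomain B] [Algebra k B]
    (D : Derivation k B B)
    (hlnD : ∀ b : B, ∃ n : ℕ, (⇑D)^[n] b = 0)
    (hAR : ∀ δ : Derivation k B B, (∀ b : B, ∃ n : ℕ, (⇑δ)^[n] b = 0) →
      ∃ h : B, D h = 0 ∧ ∀ b, δ b = h * D b)
    (hunits : ∀ b : B, IsUnit b → ∃ c : k, b = algebraMap k B c)
    (φ : B ≃ₐ[k] B) :
    ∃ f : B, D f = 0 ∧ IsUnit f ∧ ∀ b, φ (D (φ.symm b)) = f * D b := by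
  obtain ⟨f, hfD, hf⟩ := hAR (conjDer D φ) (conjDer_ln D φ hlnD)
  obtain ⟨g, hgD, hg⟩ := hAR (conjDer D φ.symm) (conjDer_ln D φ.symm hlnD)
  simp only [conjDer_apply] at hf hg
  by_cases hD : ∀ b : B, D b = 0
  · exact ⟨1, by simp, isUnit_one, fun b => by rw [hD (φ.symm b), map_zero, hD b, one_mul]⟩
  · push_neg at hD
    obtain ⟨b0, hb0⟩ := hD
    -- From the two conjugations: φ (D b0) = (f * φ g) * φ (D b0)
    have h1 : φ (D b0) = f * D (φ b0) := by
      have := hf (φ b0); rwa [φ.symm_apply_apply] at this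
    have h2 : φ.symm (D (φ b0)) = g * D b0 := by
      have := hg b0; rwa [φ.symm_symm] at this
    have h3 : D (φ b0) = φ g * φ (D b0) := by
      rw [← map_mul, ← h2, AlgEquiv.apply_symm_apply]
    have hne : φ (D b0) ≠ 0 := fun h => hb0 (by simpa using φ.injective (h.trans (map_zero φ).symm))
    have hkey : (f * φ g) * φ (D b0) = 1 * φ (D b0) := by
      rw [one_mul, mul_assoc, ← h3, ← h1]
    have hfg : f * φ g = 1 := mul_right_cancel₀ hne hkey
    exact ⟨f, hfD, IsUnit.of_mul_eq_one (a := f) (φ g) hfg, hf⟩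
end

section
/- Let B = B_{d,P} = k[X,Y₁,Y₂]/(X^d Y₂ − P(X,Y₁)) be a generalized Danielewski surface (d ≥ 2, deg_{Y₁}P ≥ 2, P monic of Y₁-degree r with ∂P/∂y₁ ≠ 0), with canonical locally nilpotent derivation D given by D(x)=0, D(y₁)=x^d, D(y₂)=∂P/∂y₁. Let δ be any locally nilpotent derivation of B and α an automorphism of B with α(x) = a·x for some a ∈ k*. Then α commutes with δ on y₁ (δα(y₁)=αδ(y₁)) if and only if α commutes with δ on y₂ (δα(y₂)=αδ(y₂)). -/
open MvPolynomial

lemma deriv_aeval_chain {k B : Type*} [CommRing k] [CommRing B] [Algebra k B]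
    (δ : Derivation k B B) (v : Fin 2 → B) (p : MvPolynomial (Fin 2) k) :
    δ (aeval v p) = ∑ i : Fin 2, aeval v (pderiv i p) * δ (v i) := by
  induction p using MvPolynomial.induction_on with
  | C a => simp
  | add p q hp hq => simp [hp, hq, add_mul, Finset.sum_add_distrib]
  | mul_X p i hp =>
      simp only [map_mul, aeval_X, Derivation.leibniz, smul_eq_mul, hp, pderiv_mul, pderiv_X,
        map_add, add_mul, Finset.sum_add_distrib, Finset.mul_sum, Fin.sum_univ_two]
      fin_cases i <;> simp <;> ring


/-- On a generalized Danielewski surface `B = k[X,Y₁,Y₂]/(X^d Y₂ − P(X,Y₁))`, an automorphism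
`α` with `α x = a • x` commutes with a locally nilpotent derivation `δ` on `y₁` if and only
if it commutes with `δ` on `y₂`. -/
theorem GDS_commute_y1_iff_commute_y2
    {k B : Type*} [Field k] [CharZero k] [CommRing B] [IsDomain B] [Algebra k B]
    (d : ℕ) (hd : 2 ≤ d)
    (P : MvPolynomial (Fin 2) k) (hr : 2 ≤ P.degreeOf 1)
    (x y₁ y₂ : B) (hx : x ≠ 0)
    (hrel : x ^ d * y₂ = MvPolynomial.aeval ![x, y₁] P)
    (hP : MvPolynomial.aeval ![x, y₁] ((MvPolynomial.pderiv (1 : Fin 2)) P) ≠ 0)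
    (δ : Derivation k B B)
    (hlnδ : ∀ b : B, ∃ n : ℕ, (⇑δ)^[n] b = 0)
    (hδx : δ x = 0)
    (a : kˣ) (α : B ≃ₐ[k] B) (hαx : α x = (a : k) • x) :
    δ (α y₁) = α (δ y₁) ↔ δ (α y₂) = α (δ y₂) := by
  set v : Fin 2 → B := ![x, y₁] with hv
  set Q : B := aeval v (pderiv (1 : Fin 2) P) with hQ
  have hδαx : δ (α x) = 0 := by rw [hαx, δ.map_smul, hδx, smul_zero]
  -- E1: x^d * δ y₂ = Q * δ y₁
  have E1 : x ^ d * δ y₂ = Q * δ y₁ := by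
    have h := congrArg δ hrel
    rw [deriv_aeval_chain, Fin.sum_univ_two] at h
    have hv0 : v 0 = x := rfl
    have hv1 : v 1 = y₁ := rfl
    rw [hv0, hv1, hδx, mul_zero, zero_add] at h
    rw [Derivation.leibniz, Derivation.leibniz_pow, hδx] at h
    simpa using h
  -- α of aeval v
  have hcomp : ∀ p : MvPolynomial (Fin 2) k,
      α (aeval v p) = aeval (fun i => α (v i)) p := fun p => by
    show α.toAlgHom (aeval v p) = _
    rw [← AlgHom.comp_apply, MvPolynomial.comp_aeval]
    rfl
  set w : Fin 2 → B := fun i => α (v i) with hw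
  have hw0 : w 0 = α x := rfl
  have hw1 : w 1 = α y₁ := rfl
  -- E2: (α x)^d * δ (α y₂) = α Q * δ (α y₁)
  have E2 : (α x) ^ d * δ (α y₂) = α Q * δ (α y₁) := by
    have h := congrArg δ (congrArg α hrel)
    rw [map_mul, map_pow, hcomp] at h
    rw [deriv_aeval_chain, Fin.sum_univ_two, hw0, hw1, hδαx, mul_zero, zero_add] at h
    rw [Derivation.leibniz, Derivation.leibniz_pow, hδαx] at h
    have : aeval w (pderiv (1 : Fin 2) P) = α Q := (hcomp _).symm
    rw [this] at h
    simpa using h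
  -- E3: (α x)^d * α (δ y₂) = α Q * α (δ y₁)
  have E3 : (α x) ^ d * α (δ y₂) = α Q * α (δ y₁) := by
    have h := congrArg α E1
    rw [map_mul, map_mul, map_pow] at h
    exact h
  have hαQ : α Q ≠ 0 := fun h => hP (by simpa using α.injective (h.trans (map_zero α).symm))
  have hαxd : (α x) ^ d ≠ 0 := pow_ne_zero _ (by
    rw [hαx]
    exact smul_ne_zero (Units.ne_zero a) hx)
  have key : (α x) ^ d * (δ (α y₂) - α (δ y₂)) = α Q * (δ (α y₁) - α (δ y₁)) := by
    rw [mul_sub, mul_sub, E2, E3]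
  constructor
  · intro h1
    have : (α x) ^ d * (δ (α y₂) - α (δ y₂)) = 0 := by rw [key, h1, sub_self, mul_zero]
    rcases mul_eq_zero.mp this with h | h
    · exact absurd h hαxd
    · exact sub_eq_zero.mp h
  · intro h2
    have : α Q * (δ (α y₁) - α (δ y₁)) = 0 := by rw [← key, h2, sub_self, mul_zero]
    rcases mul_eq_zero.mp this with h | h
    · exact absurd h hαQ
    · exact sub_eq_zero.mp h
end

section
/- Let B_{d,P} be a generalized Danielewski surface with canonical lnd D (D(x)=0, D(y₁)=x^d, D(y₂)=∂P/∂y₁), and let δ = f(x)·D where f(x) = Σ_{i=0}^{l} a_i x^{n_i} with all a_i ∈ k*. Let H_a be the automorphism given by H_a(x) = a·x, H_a(y₁) = y₁ + τ(ax) − τ(x), H_a(y₂) = a^{−d} y₂ (for appropriate τ ∈ k[x]), where a ∈ k*. Then H_a commutes with δ on y₁ if and only if a^n = 1 where n = gcd(d+n₀, …, d+n_l) and n ≥ d — equivalently, a^{d+n_i} = 1 for all i. -/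
/-- On a generalized Danielewski surface with canonical lnd `D` (`D x = 0`, `D y₁ = x^d`)
and replica `δ = f(x) • D` with `f(x) = ∑ i, c_i x^{n_i}` (`c_i ∈ k*`, distinct exponents),
the torus automorphism `H_a` (`H_a x = a x`, `H_a y₁ = y₁ + τ(ax) − τ(x)`), where
`a^q ≠ 1` for `1 ≤ q < d`, commutes with `δ` on `y₁` if and only if `a^n = 1` and `n ≥ d`,
where `n = gcd(d + n₀, …, d + n_l)`. -/
theorem GDS_Ha_commutes_iff
    {k B : Type*} [Field k] [CharZero k] [CommRing B] [IsDomain B] [Algebra k B]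
    (d : ℕ) (hd : 2 ≤ d)
    (x y₁ : B) (hx : Transcendental k x)
    (l : ℕ) (nn : Fin (l + 1) → ℕ) (hninj : Function.Injective nn)
    (cc : Fin (l + 1) → kˣ)
    (δ : Derivation k B B) (hδx : δ x = 0)
    (hδy₁ : δ y₁ = (∑ i, ((cc i : k)) • x ^ (nn i)) * x ^ d)
    (a : kˣ) (ha : ∀ q : ℕ, 1 ≤ q → q < d → (a : k) ^ q ≠ 1)
    (τ : Polynomial k) (H : B ≃ₐ[k] B)
    (hHx : H x = (a : k) • x)
    (hHy₁ : H y₁ = y₁ + Polynomial.aeval ((a : k) • x) τ - Polynomial.aeval x τ) :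
    δ (H y₁) = H (δ y₁) ↔
      ((a : k) ^ (Finset.univ.gcd fun i => d + nn i) = 1 ∧
        d ≤ Finset.univ.gcd fun i => d + nn i) := by
  classical
  have hinj : Function.Injective (Polynomial.aeval x : Polynomial k →ₐ[k] B) :=
    transcendental_iff_injective.mp hx
  set g : ℕ := Finset.univ.gcd fun i => d + nn i with hg
  -- δ kills aeval at points annihilated by δ
  have hδax : δ ((a : k) • x) = 0 := by rw [Derivation.map_smul, hδx, smul_zero]
  have h1 : δ (H y₁) = δ y₁ := by
    rw [hHy₁, map_sub, map_add, Derivation.map_aeval, Derivation.map_aeval, hδax, hδx,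
      smul_zero, smul_zero, add_zero, sub_zero]
  have hP1 : δ y₁ =
      Polynomial.aeval x (∑ i, Polynomial.C ((cc i : k)) * Polynomial.X ^ (d + nn i)) := by
    rw [hδy₁, Finset.sum_mul, map_sum]
    refine Finset.sum_congr rfl fun i _ => ?_
    rw [map_mul, Polynomial.aeval_C, Polynomial.aeval_X_pow, ← Algebra.smul_def,
      pow_add, smul_mul_assoc, mul_comm]
  have hP2 : H (δ y₁) =
      Polynomial.aeval x
        (∑ i, Polynomial.C ((cc i : k) * (a : k) ^ (d + nn i)) * Polynomial.X ^ (d + nn i)) := by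
    rw [hδy₁, map_mul, map_sum, map_sum]
    have hx' : ∀ m : ℕ, H (x ^ m) = (a : k) ^ m • x ^ m := fun m => by
      rw [map_pow, hHx, smul_pow]
    rw [hx' d, Finset.sum_mul]
    refine Finset.sum_congr rfl fun i _ => ?_
    rw [map_smul, hx' (nn i), map_mul, Polynomial.aeval_C, Polynomial.aeval_X_pow]
    simp only [Algebra.smul_def, map_mul, map_pow, pow_add]
    ring
  -- key equivalence with the pointwise condition
  have key : δ (H y₁) = H (δ y₁) ↔ ∀ i, (a : k) ^ (d + nn i) = 1 := by
    rw [h1, hP2, hP1]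
    constructor
    · intro h i
      have hPeq := hinj h
      have hcoeff := congrArg (fun p => Polynomial.coeff p (d + nn i)) hPeq
      simp only [Polynomial.finset_sum_coeff, Polynomial.coeff_C_mul,
        Polynomial.coeff_X_pow] at hcoeff
      have hm : ∀ j j' : Fin (l + 1), d + nn j = d + nn j' → j = j' :=
        fun j j' h => hninj (by omega)
      rw [Finset.sum_eq_single i, Finset.sum_eq_single i] at hcoeff
      · simp only [if_pos trivial, mul_one] at hcoeff
        exact (mul_left_cancel₀ (cc i).ne_zero (by rw [mul_one]; exact hcoeff)).symm
      all_goals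
        first
        | (intro j _ hji
           have hne : ¬ (d + nn i = d + nn j) := fun h => hji (hm i j h).symm
           rw [if_neg hne, mul_zero])
        | (intro h; exact absurd (Finset.mem_univ i) h)
    · intro h
      refine congrArg _ (Finset.sum_congr rfl fun i _ => ?_)
      rw [h i, mul_one]
  rw [key]
  -- now the arithmetic equivalence with the gcd
  have hu : ∀ m : ℕ, (a : k) ^ m = 1 ↔ a ^ m = 1 := fun m =>
    ⟨fun h => Units.ext (by simpa using h), fun h => by simpa using congrArg Units.val h⟩
  constructor
  · intro h
    have hdvd : ∀ i : Fin (l + 1), orderOf a ∣ d + nn i := fun i =>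
      orderOf_dvd_of_pow_eq_one ((hu _).mp (h i))
    have hog : orderOf a ∣ g := Finset.dvd_gcd fun i _ => hdvd i
    have hag : (a : k) ^ g = 1 := (hu g).mpr (orderOf_dvd_iff_pow_eq_one.mp hog)
    refine ⟨hag, ?_⟩
    by_contra hlt
    push_neg at hlt
    have hg1 : 1 ≤ g := by
      rcases Nat.eq_zero_or_pos g with h0 | h0
      · have := Finset.gcd_dvd (f := fun i => d + nn i) (Finset.mem_univ (0 : Fin (l + 1)))
        rw [← hg, h0] at this
        have h2 : d + nn 0 = 0 := Nat.eq_zero_of_zero_dvd this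
        omega
      · exact h0
    exact ha g hg1 hlt hag
  · rintro ⟨hag, -⟩ i
    obtain ⟨t, ht⟩ := Finset.gcd_dvd (f := fun i => d + nn i) (Finset.mem_univ i)
    rw [← hg] at ht
    rw [ht, pow_mul, hag, one_pow]
end

section
/- Let B = B_{d₁,P₁;d₂,P₂} = k[X,Y₁,Y₂,Y₃]/(X^{d₁}Y₂−P₁(X,Y₁), X^{d₂}Y₃−P₂(X,Y₁,Y₂)) be a Double Danielewski surface with canonical lnd D, and δ = f(x)·D with f(x) = Σ_{i=0}^{l} a_i x^{n_i}, a_i ∈ k*. Let α be an automorphism with α(x) = λx and α(y₁) = a·y₁ + b(x), λ, a ∈ k*, b ∈ k[x]. Then δα(y₁) = αδ(y₁) if and only if a = λ^{d₁+d₂+n_i} for all 0 ≤ i ≤ l. In particular for δ = D, α commutes with δ on y₁ iff a = λ^{d₁+d₂}. -/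
/-- On a Double Danielewski surface with canonical lnd `D` (`D x = 0`,
`D y₁ = x^{d₁+d₂}`) and replica `δ = f(x) • D` with `f(x) = ∑ i, c_i x^{n_i}` (`c_i ∈ k*`,
distinct exponents), an automorphism `α` with `α x = λ • x`, `α y₁ = a • y₁ + b(x)`
satisfies `δ (α y₁) = α (δ y₁)` if and only if `a = λ^{d₁+d₂+n_i}` for all `i`.
In particular, for `δ = D` (`f = 1`), the condition is `a = λ^{d₁+d₂}`. -/
theorem DDS_commute_on_y1_iff
    {k B : Type*} [Field k] [CharZero k] [CommRing B] [IsDomain B] [Algebra k B]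
    (d₁ d₂ : ℕ) (hd₁ : 2 ≤ d₁) (hd₂ : 2 ≤ d₂)
    (x y₁ : B) (hx : Transcendental k x)
    (l : ℕ) (nn : Fin (l + 1) → ℕ) (hninj : Function.Injective nn)
    (cc : Fin (l + 1) → kˣ)
    (δ : Derivation k B B) (hδx : δ x = 0)
    (hδy₁ : δ y₁ = (∑ i, ((cc i : k)) • x ^ (nn i)) * x ^ (d₁ + d₂))
    (lam a : kˣ) (bpoly : Polynomial k)
    (α : B ≃ₐ[k] B)
    (hαx : α x = (lam : k) • x)
    (hαy₁ : α y₁ = (a : k) • y₁ + Polynomial.aeval x bpoly) :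
    δ (α y₁) = α (δ y₁) ↔ ∀ i, (a : k) = (lam : k) ^ (d₁ + d₂ + nn i) := by
  classical
  have hinj : Function.Injective (Polynomial.aeval x : Polynomial k →ₐ[k] B) :=
    transcendental_iff_injective.mp hx
  have hδb : δ (Polynomial.aeval x bpoly) = 0 := by
    rw [Derivation.map_aeval, hδx, smul_zero]
  have hL : δ (α y₁) =
      Polynomial.aeval x (∑ i, Polynomial.C ((a : k) * (cc i : k)) *
        Polynomial.X ^ (nn i + (d₁ + d₂))) := by
    rw [hαy₁, map_add, Derivation.map_smul, hδb, add_zero, hδy₁, map_sum,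
      Finset.sum_mul, Finset.smul_sum]
    refine Finset.sum_congr rfl fun i _ => ?_
    simp only [map_mul, Polynomial.aeval_C, Polynomial.aeval_X_pow, Algebra.smul_def,
      map_mul, pow_add]
    ring
  have hR : α (δ y₁) =
      Polynomial.aeval x (∑ i, Polynomial.C ((cc i : k) * (lam : k) ^ (d₁ + d₂ + nn i)) *
        Polynomial.X ^ (nn i + (d₁ + d₂))) := by
    rw [hδy₁, map_mul, map_sum, map_pow, hαx, map_sum, Finset.sum_mul]
    refine Finset.sum_congr rfl fun i _ => ?_
    rw [map_smul, map_pow, hαx]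
    simp only [smul_pow, Algebra.smul_def, map_mul, map_pow, Polynomial.aeval_X_pow,
      Polynomial.aeval_C, Polynomial.aeval_X, pow_add]
    ring
  rw [hL, hR]
  constructor
  · intro h i
    have hpoly := hinj h
    have hco := congrArg (fun p => Polynomial.coeff p (nn i + (d₁ + d₂))) hpoly
    simp only [Polynomial.finset_sum_coeff, Polynomial.coeff_C_mul,
      Polynomial.coeff_X_pow] at hco
    have hsingle : ∀ (u : Fin (l+1) → k),
        (∑ j, u j * (if nn i + (d₁ + d₂) = nn j + (d₁ + d₂) then (1:k) else 0)) = u i := by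
      intro u
      rw [Finset.sum_eq_single i]
      · simp
      · intro j _ hj
        rw [if_neg, mul_zero]
        intro hc
        exact hj (hninj (by omega))
      · simp
    rw [hsingle, hsingle] at hco
    have hc : (cc i : k) ≠ 0 := (cc i).ne_zero
    have h2 : ((a : k) - (lam : k) ^ (d₁ + d₂ + nn i)) * (cc i : k) = 0 := by
      linear_combination hco
    rcases mul_eq_zero.mp h2 with h' | h'
    · exact sub_eq_zero.mp h'
    · exact absurd h' hc
  · intro h
    congr 1
    refine Finset.sum_congr rfl fun i _ => ?_
    rw [h i]; ring
end
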